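/- Let G be a connected finite simple graph with nonnegative edge weights w, let C be a cycle of G, and let s be a vertex of G. Then there exist a vertex y and two distinct paths from s to y in G, each of weight at most dist_G(s, C) + w(C), where dist_G(s, C) = min_{x ∈ V(C)} dist_G(s, x). -/

import Mathlib

/-- The weight of a walk: the sum of the weights of its edges (with multiplicity). -/
noncomputable def walkWeight {V : Type*} {G : SimpleGraph V} (w : Sym2 V → ℝ) {u v : V}
    (p : G.Walk u v) : ℝ := (p.edges.map w).sum

/-- The weighted distance between two vertices: the infimum of the weights of paths
between them. -/
noncomputable def gdist {V : Type*} (G : SimpleGraph V) (w : Sym2 V → ℝ) (u v : V) : ℝ :=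
  sInf {x : ℝ | ∃ p : G.Walk u v, p.IsPath ∧ walkWeight w p = x}

/-!
Let `t` be the first vertex on `C` of a shortest path from `s` to a nearest vertex of `C`, and
let `q` be the part of that path up to `t`, so `w(q) ≤ dist(s, C)` and `q` meets `C` only in `t`.
If `v` is a neighbour of `t` on `C`, then `q` followed by the edge `tv` and `q` followed by the
rest of `C` from `t` to `v` are two distinct paths from `s` to `v`, and each of the two pieces
of `C` weighs at most `w(C)` because the weights are nonnegative.
-/

open SimpleGraph Walk

section WalkWeight

variable {V : Type*} {G : SimpleGraph V} {w : Sym2 V → ℝ}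

@[simp]
lemma walkWeight_nil {u : V} : walkWeight w (nil : G.Walk u u) = 0 := by
  simp [walkWeight]

@[simp]
lemma walkWeight_cons {u v x : V} (h : G.Adj u v) (p : G.Walk v x) :
    walkWeight w (cons h p) = w s(u, v) + walkWeight w p := by
  simp [walkWeight]

@[simp]
lemma walkWeight_append {u v x : V} (p : G.Walk u v) (q : G.Walk v x) :
    walkWeight w (p.append q) = walkWeight w p + walkWeight w q := by
  simp [walkWeight]

@[simp]
lemma walkWeight_reverse {u v : V} (p : G.Walk u v) :
    walkWeight w p.reverse = walkWeight w p := by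
  simp [walkWeight, List.sum_reverse]

@[simp]
lemma walkWeight_rotate [DecidableEq V] {u v : V} (c : G.Walk v v) (h : u ∈ c.support) :
    walkWeight w (c.rotate u h) = walkWeight w c :=
  ((c.rotate_edges u h).perm.map w).sum_eq

lemma walkWeight_nonneg (hw : ∀ e ∈ G.edgeSet, 0 ≤ w e) {u v : V} (p : G.Walk u v) :
    0 ≤ walkWeight w p :=
  List.sum_nonneg fun _ hr ↦ by
    obtain ⟨e, he, rfl⟩ := List.mem_map.1 hr
    exact hw e (p.edges_subset_edgeSet he)

end WalkWeight

lemma exists_isPath_walkWeight_eq_gdist {V : Type*} [Fintype V] {G : SimpleGraph V}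
    (w : Sym2 V → ℝ) {u v : V} (huv : G.Reachable u v) :
    ∃ p : G.Walk u v, p.IsPath ∧ walkWeight w p = gdist G w u v := by
  classical
  have hrange : {x : ℝ | ∃ p : G.Walk u v, p.IsPath ∧ walkWeight w p = x} =
      Set.range (fun p : G.Path u v ↦ walkWeight w (p : G.Walk u v)) := by
    ext x
    exact ⟨fun ⟨p, hp, hx⟩ ↦ ⟨⟨p, hp⟩, hx⟩, fun ⟨p, hx⟩ ↦ ⟨p, p.2, hx⟩⟩
  obtain ⟨p⟩ := huv
  have hne : (Set.range fun p : G.Path u v ↦ walkWeight w (p : G.Walk u v)).Nonempty :=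
    Set.range_nonempty_iff_nonempty.2 ⟨p.toPath⟩
  have hmin := hne.csInf_mem (Set.finite_range _)
  rw [← hrange] at hmin
  exact hmin

lemma exists_mem_eq_csInf {α β : Type*} [ConditionallyCompleteLinearOrder β] (f : α → β)
    {l : List α} {a : α} (ha : a ∈ l) : ∃ x ∈ l, f x = sInf {d : β | ∃ x ∈ l, f x = d} := by
  have himage : {d : β | ∃ x ∈ l, f x = d} = f '' {x | x ∈ l} := rfl
  rw [himage]
  exact (Set.nonempty_of_mem (Set.mem_image_of_mem f ha)).csInf_mem (l.finite_toSet.image f)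

namespace SimpleGraph.Walk

variable {V : Type*} {G : SimpleGraph V}

lemma IsPath.append_of_support_inter {s t y : V} {p : G.Walk s t} {q : G.Walk t y}
    (hp : p.IsPath) (hq : q.IsPath) (hpq : ∀ z ∈ p.support, z ∈ q.support → z = t) :
    (p.append q).IsPath := by
  have hq' := hq.support_nodup
  rw [← cons_tail_support, List.nodup_cons] at hq'
  rw [isPath_def, support_append]
  exact hp.support_nodup.append hq'.2 fun z hzp hzq ↦
    hq'.1 (hpq z hzp (List.mem_of_mem_tail hzq) ▸ hzq)

lemma exists_append_eq_first_mem (S : Set V) {s x : V} (p : G.Walk s x) (hx : x ∈ S) :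
    ∃ (t : V) (q : G.Walk s t) (r : G.Walk t x),
      p = q.append r ∧ t ∈ S ∧ ∀ z ∈ q.support, z ∈ S → z = t := by
  induction p with
  | nil => exact ⟨_, nil, nil, rfl, hx, by simp⟩
  | @cons a b c h p ih =>
    by_cases ha : a ∈ S
    · exact ⟨a, nil, cons h p, rfl, ha, by simp⟩
    · obtain ⟨t, q, r, rfl, htS, hqS⟩ := ih hx
      refine ⟨t, cons h q, r, rfl, htS, ?_⟩
      rintro z (_ | ⟨_, hz⟩) hzS
      · exact absurd hzS ha
      · exact hqS z hz hzS

lemma exists_two_isPath_of_isCycle {w : Sym2 V → ℝ} (hw : ∀ e ∈ G.edgeSet, 0 ≤ w e)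
    {s t : V} {q : G.Walk s t} (hq : q.IsPath) {c : G.Walk t t} (hc : c.IsCycle)
    (hqc : ∀ z ∈ q.support, z ∈ c.support → z = t) :
    ∃ (y : V) (p₁ p₂ : G.Walk s y), p₁.IsPath ∧ p₂.IsPath ∧ p₁ ≠ p₂ ∧
      walkWeight w p₁ ≤ walkWeight w q + walkWeight w c ∧
      walkWeight w p₂ ≤ walkWeight w q + walkWeight w c := by
  cases c with
  | nil => exact absurd hc not_isCycle_nil
  | cons h r =>
    have hr : r.IsPath := ((cons_isCycle_iff r h).1 hc).1
    have hlen := hc.three_le_length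
    refine ⟨_, q.append (cons h nil), q.append r.reverse, ?_, ?_, ?_, ?_, ?_⟩
    · refine hq.append_of_support_inter (by simp [h.ne]) fun z hz hz' ↦ hqc z hz ?_
      simp only [support_cons, support_nil, List.mem_cons, List.not_mem_nil, or_false] at hz' ⊢
      rcases hz' with rfl | rfl
      · exact .inl rfl
      · exact .inr r.start_mem_support
    · refine hq.append_of_support_inter hr.reverse fun z hz hz' ↦ hqc z hz ?_
      rw [support_reverse, List.mem_reverse] at hz'
      exact List.mem_cons_of_mem _ hz'
    · intro heq
      have := congrArg length heq
      simp only [length_append, length_cons, length_nil, length_reverse] at this hlen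
      omega
    · have := walkWeight_nonneg hw r
      simp only [walkWeight_append, walkWeight_cons, walkWeight_nil]
      linarith
    · have := hw s(_, _) h
      simp only [walkWeight_append, walkWeight_reverse, walkWeight_cons]
      linarith

end SimpleGraph.Walk

/-- In a connected finite simple graph with nonnegative edge weights, given a cycle `C` and a
vertex `s`, there exist a vertex `y` and two distinct paths from `s` to `y`, each of weight at
most `dist_G(s, C) + w(C)`, where `dist_G(s, C) = min_{x ∈ V(C)} dist_G(s, x)`. -/
theorem stmt5 {V : Type*} [Fintype V] (G : SimpleGraph V) (hG : G.Connected)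
    (w : Sym2 V → ℝ) (hw : ∀ e ∈ G.edgeSet, 0 ≤ w e)
    (u : V) (C : G.Walk u u) (hC : C.IsCycle) (s : V) :
    ∃ (y : V) (P₁ P₂ : G.Walk s y), P₁.IsPath ∧ P₂.IsPath ∧ P₁ ≠ P₂ ∧
      walkWeight w P₁ ≤ sInf {d : ℝ | ∃ x ∈ C.support, gdist G w s x = d} + walkWeight w C ∧
      walkWeight w P₂ ≤ sInf {d : ℝ | ∃ x ∈ C.support, gdist G w s x = d} + walkWeight w C := by
  classical
  obtain ⟨x, hxC, hx⟩ := exists_mem_eq_csInf (gdist G w s) C.start_mem_support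
  obtain ⟨p, hp, hpx⟩ := exists_isPath_walkWeight_eq_gdist w (hG.preconnected s x)
  obtain ⟨t, q, r, rfl, htC, hqC⟩ := exists_append_eq_first_mem {z | z ∈ C.support} p hxC
  obtain ⟨y, P₁, P₂, h₁, h₂, hne, hw₁, hw₂⟩ :=
    exists_two_isPath_of_isCycle hw hp.of_append_left (hC.rotate htC)
      (by simpa only [mem_support_rotate_iff, Set.mem_ofPred_eq] using hqC)
  have hq : walkWeight w q ≤ sInf {d : ℝ | ∃ x ∈ C.support, gdist G w s x = d} := by
    rw [← hx, ← hpx, walkWeight_append]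
    linarith [walkWeight_nonneg hw r]
  rw [walkWeight_rotate] at hw₁ hw₂
  exact ⟨y, P₁, P₂, h₁, h₂, hne, by linarith, by linarith⟩
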